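/- arXiv:2304.01667 — 2 statements merged into one kernel-verified Lean document; each statement's English description precedes it below -/
import Mathlib

section
/- Let D be a separable Banach space (in particular a separable C*-algebra) and I any index set. For every x in ℓ∞(I; D) and every ε > 0, there exists a countable subset J ⊆ I and a map f : ℓ∞(J; D) → ℓ∞(I; D) of norm at most 1 such that ‖f(p_J(x)) − x‖ ≤ ε, where p_J denotes restriction to J. More precisely, one can cover D by countably many disjoint Borel sets B_n of diameter < ε, pick a point i_n in each nonempty preimage x⁻¹(B_n), take J = {i_n}, and define f(y) = Σ_n 1_{x⁻¹(B_n)} · y(i_n). -/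
/- Cover the separable range of `x` by countably many `ε`-balls around points `x j` and
send every index `i` to the center `j` of a ball containing `x i`; the resulting
composition operator `y ↦ y ∘ r` is a contraction that moves `x` by at most `ε`. -/

open TopologicalSpace

theorem exists_countable_forall_exists_dist_lt {α I : Type*} [PseudoMetricSpace α]
    [SeparableSpace α] (x : I → α) {ε : ℝ} (hε : 0 < ε) :
    ∃ J : Set I, J.Countable ∧ ∀ i, ∃ j ∈ J, dist (x i) (x j) < ε := by
  obtain ⟨T, hTx, hTc, hTdense⟩ :=
    (IsSeparable.of_separableSpace (Set.range x)).exists_countable_dense_subset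
  choose g hg using fun t : T => hTx t.2
  have : Countable T := hTc.to_subtype
  refine ⟨Set.range g, Set.countable_range g, fun i => ?_⟩
  obtain ⟨t, htT, hdist⟩ := Metric.mem_closure_iff.1 (hTdense ⟨i, rfl⟩) ε hε
  exact ⟨g ⟨t, htT⟩, ⟨_, rfl⟩, by rwa [hg]⟩

theorem stmt_0_general {D : Type*} [NormedAddCommGroup D] [NormedSpace ℝ D]
    [TopologicalSpace.SeparableSpace D]
    {I : Type*} (x : I → D)
    {ε : ℝ} (hε : 0 < ε) :
    ∃ J : Set I, J.Countable ∧
      ∃ f : (J → D) →ₗ[ℝ] (I → D),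
        (∀ (y : J → D) (C : ℝ), 0 ≤ C → (∀ j, ‖y j‖ ≤ C) → ∀ i, ‖f y i‖ ≤ C) ∧
        (∀ i, ‖f (fun j : J => x j) i - x i‖ ≤ ε) := by
  obtain ⟨J, hJ, hnear⟩ := exists_countable_forall_exists_dist_lt x hε
  choose r hrJ hr using hnear
  refine ⟨J, hJ, LinearMap.funLeft ℝ D fun i => ⟨r i, hrJ i⟩, fun y C _ hy i => hy _,
    fun i => ?_⟩
  rw [← dist_eq_norm, dist_comm]
  exact (hr i).le

/-- Let `D` be a separable Banach space and `I` any index set.  For every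
bounded `x : I → D` (an element of `ℓ∞(I; D)`) and every `ε > 0`, there is a countable
subset `J ⊆ I` and a linear map `f : ℓ∞(J; D) → ℓ∞(I; D)` of norm at most `1`
(expressed pointwise: it maps functions bounded by `C` to functions bounded by `C`)
such that `‖f (p_J x) − x‖_∞ ≤ ε`, where `p_J` is the restriction map to `J`. -/
theorem stmt_0 {D : Type*} [NormedAddCommGroup D] [NormedSpace ℝ D]
    [TopologicalSpace.SeparableSpace D]
    {I : Type*} (x : I → D) (hx : ∃ C : ℝ, ∀ i, ‖x i‖ ≤ C)
    {ε : ℝ} (hε : 0 < ε) :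
    ∃ J : Set I, J.Countable ∧
      ∃ f : (J → D) →ₗ[ℝ] (I → D),
        (∀ (y : J → D) (C : ℝ), 0 ≤ C → (∀ j, ‖y j‖ ≤ C) → ∀ i, ‖f y i‖ ≤ C) ∧
        (∀ i, ‖f (fun j : J => x j) i - x i‖ ≤ ε) :=
  stmt_0_general x hε
end

section
/- Let F be an uncountable free group and X ⊆ C*(F) a separable subspace. Then there is a C*-subalgebra C' ⊆ C*(F), unitally *-isomorphic to C*(F_∞) (the full C*-algebra of the free group on countably many generators), with X ⊆ C' and a unital completely positive contractive projection P : C*(F) → C'. -/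
/-!
By universality the span of the unitaries `u g` is dense in `C*(F)`, so a separable subspace lies
in the closed span of countably many of them, and these involve only countably many generators.
Enlarge those to a countably infinite set of generators, the range of an injection `f : ℕ → S`.
The inclusion `FreeGroup.map f` has a retraction, and universality turns both into unital
*-homomorphisms `φ : C*(F_∞) → C*(F)` and `ψ : C*(F) → C*(F_∞)` with `ψ ∘ φ = id`. Hence `φ` is
an isomorphism onto its (closed) range, and `φ ∘ ψ` is the required projection: *-homomorphisms
of C*-algebras are contractive and completely positive.
-/

open scoped TensorProduct

/-- A linear map between C*-algebras is completely positive if all its matrix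
amplifications preserve positivity. -/
def IsCPMap {A B : Type*} [CStarAlgebra A] [CStarAlgebra B] (P : A →ₗ[ℂ] B) : Prop :=
  ∀ (n : ℕ) (m : Matrix (Fin n) (Fin n) A),
    (∃ y : Matrix (Fin n) (Fin n) A, m = star y * y) →
    ∃ z : Matrix (Fin n) (Fin n) B, m.map P = star z * z

/-- `𝒞` together with `u : FreeGroup S →* U(𝒞)` is the full group C*-algebra of the
free group on the set `S`: every unitary representation of `FreeGroup S` in a
C*-algebra factors uniquely through a unital *-homomorphism on `𝒞`. -/
def IsUniversalFreeGroupCStar (S : Type) (𝒞 : Type) [CStarAlgebra 𝒞]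
    (u : FreeGroup S →* unitary 𝒞) : Prop :=
  ∀ (B : Type) [CStarAlgebra B], ∀ v : FreeGroup S →* unitary B,
    ∃! φ : 𝒞 →⋆ₐ[ℂ] B, ∀ g, φ (u g : 𝒞) = (v g : B)

open Set Submodule Function TopologicalSpace
open scoped CStarAlgebra

theorem Submodule.exists_finset_mem_span_image_of_mem_span_range {R M ι : Type*} [Semiring R]
    [AddCommMonoid M] [Module R M] {v : ι → M} {x : M} (hx : x ∈ span R (range v)) :
    ∃ t : Finset ι, x ∈ span R (v '' t) := by
  rw [← image_univ, mem_span_image_iff_exists_fun] at hx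
  obtain ⟨t, -, c, rfl⟩ := hx
  exact ⟨t, (mem_span_image_iff_exists_fun R).mpr ⟨t, subset_rfl, c, rfl⟩⟩

theorem Dense.exists_countable_subset_closure_span {R M ι : Type*} [Semiring R]
    [AddCommMonoid M] [Module R M] [TopologicalSpace M] [FrechetUrysohnSpace M] {v : ι → M}
    (hv : Dense (span R (range v) : Set M)) {X : Set M} (hX : IsSeparable X) :
    ∃ K : Set ι, K.Countable ∧ X ⊆ closure (span R (v '' K)) := by
  have hpoint (x : M) : ∃ K : Set ι, K.Countable ∧ x ∈ closure (span R (v '' K) : Set M) := by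
    obtain ⟨y, hy, hyx⟩ := mem_closure_iff_seq_limit.mp (hv x)
    choose t ht using fun n => exists_finset_mem_span_image_of_mem_span_range (hy n)
    refine ⟨⋃ n, t n, countable_iUnion fun n => (t n).countable_toSet,
      mem_closure_of_tendsto hyx (Filter.Eventually.of_forall fun n => ?_)⟩
    exact span_mono (image_mono (subset_iUnion (fun n => (t n : Set ι)) n)) (ht n)
  obtain ⟨D, hDc, hXD⟩ := hX
  choose K hKc hK using hpoint
  refine ⟨⋃ d ∈ D, K d, hDc.biUnion fun d _ => hKc d,
    hXD.trans (closure_minimal ?_ isClosed_closure)⟩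
  intro d hd
  exact closure_mono (span_mono (image_mono (subset_biUnion_of_mem hd))) (hK d)

theorem FreeGroup.exists_finite_mem_closure_image_of {α : Type*} (g : FreeGroup α) :
    ∃ T : Set α, T.Finite ∧ g ∈ Subgroup.closure (of '' T) := by
  induction g using FreeGroup.induction_on with
  | C1 => exact ⟨∅, finite_empty, one_mem _⟩
  | of x => exact ⟨{x}, finite_singleton x, Subgroup.subset_closure (mem_image_of_mem _ rfl)⟩
  | inv_of x hx =>
    obtain ⟨T, hT, hxT⟩ := hx
    exact ⟨T, hT, inv_mem hxT⟩
  | mul x y hx hy =>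
    obtain ⟨T, hT, hxT⟩ := hx
    obtain ⟨T', hT', hyT'⟩ := hy
    have mono {T T' : Set α} (h : T ⊆ T') := Subgroup.closure_mono (image_mono (f := of) h)
    exact ⟨T ∪ T', hT.union hT',
      mul_mem (mono subset_union_left hxT) (mono subset_union_right hyT')⟩

theorem FreeGroup.exists_countable_subset_closure_image_of {α : Type*} {K : Set (FreeGroup α)}
    (hK : K.Countable) : ∃ T : Set α, T.Countable ∧ K ⊆ Subgroup.closure (of '' T) := by
  choose T hT hgT using fun g : FreeGroup α => exists_finite_mem_closure_image_of g
  refine ⟨⋃ g ∈ K, T g, hK.biUnion fun g _ => (hT g).countable, fun g hg => ?_⟩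
  exact Subgroup.closure_mono (image_mono (subset_biUnion_of_mem hg)) (hgT g)

theorem Set.Countable.exists_injective_nat_subset_range {α : Type*} [Infinite α] {T : Set α}
    (hT : T.Countable) : ∃ f : ℕ → α, Injective f ∧ T ⊆ range f := by
  set U := T ∪ range (_root_.Infinite.natEmbedding α)
  have : Countable U := (hT.union (countable_range _)).to_subtype
  have : Infinite U := (infinite_range_of_injective (_root_.Infinite.natEmbedding α).injective).mono
    subset_union_right |>.to_subtype
  obtain ⟨e⟩ := nonempty_equiv_of_countable (α := ℕ) (β := U)
  exact ⟨(↑) ∘ e, Subtype.val_injective.comp e.injective, fun t ht =>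
    ⟨e.symm ⟨t, .inl ht⟩, by simp⟩⟩

theorem FreeGroup.leftInverse_map_invFun_map {α β : Type*} [Nonempty α] {f : α → β}
    (hf : Injective f) : LeftInverse (map (invFun f)) (map f) := fun x => by
  rw [map.comp, invFun_comp hf, map.id]

namespace IsUniversalFreeGroupCStar

variable {S 𝒞 : Type} [CStarAlgebra 𝒞] {u : FreeGroup S →* unitary 𝒞}
  (h : IsUniversalFreeGroupCStar S 𝒞 u)
include h

noncomputable def lift {B : Type} [CStarAlgebra B] (v : FreeGroup S →* unitary B) :
    𝒞 →⋆ₐ[ℂ] B :=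
  (h B v).exists.choose

theorem lift_apply {B : Type} [CStarAlgebra B] (v : FreeGroup S →* unitary B) (g : FreeGroup S) :
    h.lift v (u g) = v g :=
  (h B v).exists.choose_spec g

theorem hom_ext {B : Type} [CStarAlgebra B] {φ₁ φ₂ : 𝒞 →⋆ₐ[ℂ] B}
    (he : ∀ g, φ₁ (u g) = φ₂ (u g)) : φ₁ = φ₂ :=
  (h B ((Unitary.map (StarMonoidHom.ofClass φ₁)).toMonoidHom.comp u)).unique
    (fun _ => rfl) (fun g => (he g).symm)

theorem eq_top_of_isClosed {A : StarSubalgebra ℂ 𝒞} [IsClosed (A : Set 𝒞)]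
    (hA : ∀ g, (u g : 𝒞) ∈ A) : A = ⊤ := by
  let v : FreeGroup S →* unitary A :=
    { toFun g := ⟨⟨u g, hA g⟩, Subtype.ext (Unitary.coe_star_mul_self (u g)),
        Subtype.ext (Unitary.coe_mul_star_self (u g))⟩
      map_one' := by ext; simp
      map_mul' g g' := by ext; simp }
  have hsec : A.subtype.comp (h.lift v) = StarAlgHom.id ℂ 𝒞 :=
    h.hom_ext fun g => congrArg Subtype.val (h.lift_apply v g)
  refine eq_top_iff.mpr fun x _ => ?_
  have hx : (h.lift v x : 𝒞) = x := DFunLike.congr_fun hsec x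
  exact hx ▸ (h.lift v x).2

theorem dense_span_range : Dense (span ℂ (range fun g => (u g : 𝒞)) : Set 𝒞) := by
  set M := MonoidHom.mrange ((unitary 𝒞).subtype.comp u)
  have hM : (M : Set 𝒞) = range fun g => (u g : 𝒞) := MonoidHom.coe_mrange _
  have hstar : star (M : Set 𝒞) ⊆ M := by
    intro x ⟨g, hg⟩
    refine ⟨g⁻¹, ?_⟩
    rw [← star_star x, ← hg]
    simp [← Unitary.star_eq_inv, Unitary.coe_star]
  have hspan : ((StarAlgebra.adjoin ℂ (M : Set 𝒞) : StarSubalgebra ℂ 𝒞) : Set 𝒞) =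
      span ℂ (M : Set 𝒞) := by
    rw [← StarSubalgebra.coe_toSubalgebra, ← Subalgebra.coe_toSubmodule,
      StarAlgebra.adjoin_eq_span, union_eq_self_of_subset_right hstar, Submonoid.closure_eq]
  set A := StarAlgebra.adjoin ℂ (M : Set 𝒞)
  have : IsClosed (A.topologicalClosure : Set 𝒞) := A.isClosed_topologicalClosure
  have htop := h.eq_top_of_isClosed (A := A.topologicalClosure) fun g =>
    A.le_topologicalClosure (StarAlgebra.subset_adjoin ℂ _ (hM ▸ ⟨g, rfl⟩))
  rw [← hM, ← hspan, dense_iff_closure_eq, ← StarSubalgebra.topologicalClosure_coe, htop]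
  rfl

theorem exists_leftInverse_lift {S' 𝒞' : Type} [CStarAlgebra 𝒞'] {u' : FreeGroup S' →* unitary 𝒞'}
    (h' : IsUniversalFreeGroupCStar S' 𝒞' u') {ι : FreeGroup S' →* FreeGroup S}
    {r : FreeGroup S →* FreeGroup S'} (hr : LeftInverse r ι) :
    ∃ φ : 𝒞' →⋆ₐ[ℂ] 𝒞, ∃ ψ : 𝒞 →⋆ₐ[ℂ] 𝒞', LeftInverse ψ φ ∧ ∀ w, φ (u' w) = u (ι w) := by
  set φ := h'.lift (u.comp ι)
  set ψ := h.lift (u'.comp r)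
  have hψφ : ψ.comp φ = StarAlgHom.id ℂ 𝒞' := h'.hom_ext fun w => by
    simp only [StarAlgHom.comp_apply, φ, ψ, h'.lift_apply, MonoidHom.comp_apply, h.lift_apply, hr w]
    rfl
  exact ⟨φ, ψ, fun x => DFunLike.congr_fun hψφ x, h'.lift_apply _⟩

end IsUniversalFreeGroupCStar

namespace StarAlgHom

variable {A B : Type*} [CStarAlgebra A] [CStarAlgebra B]

theorem isCPMap (θ : A →⋆ₐ[ℂ] B) : IsCPMap θ.toAlgHom.toLinearMap := by
  rintro n m ⟨y, rfl⟩
  refine ⟨y.map θ, ?_⟩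
  ext i j
  simp [Matrix.map_apply, Matrix.mul_apply, Matrix.star_apply, map_sum, map_mul, map_star]

variable {φ : B →⋆ₐ[ℂ] A} {ψ : A →⋆ₐ[ℂ] B}

theorem isClosed_range_of_leftInverse (h : LeftInverse ψ φ) : IsClosed (φ.range : Set A) := by
  have hrange : (φ.range : Set A) = {y | φ (ψ y) = y} := by
    ext y
    refine ⟨?_, fun hy => ⟨ψ y, hy⟩⟩
    rintro ⟨x, rfl⟩
    exact congrArg φ (h x)
  rw [hrange]
  exact isClosed_eq (map_continuous (φ.comp ψ)) continuous_id

theorem exists_ucp_projection_range (h : LeftInverse ψ φ) :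
    ∃ P : A →ₗ[ℂ] A, P 1 = 1 ∧ IsCPMap P ∧ (∀ y, ‖P y‖ ≤ ‖y‖) ∧
      (∀ y, P y ∈ φ.range) ∧ (∀ y ∈ φ.range, P y = y) := by
  refine ⟨(φ.comp ψ).toAlgHom.toLinearMap, map_one (φ.comp ψ), (φ.comp ψ).isCPMap,
    fun y => NonUnitalStarAlgHom.norm_apply_le (φ.comp ψ) y, fun y => ⟨ψ y, rfl⟩, ?_⟩
  rintro _ ⟨x, rfl⟩
  exact congrArg φ (h x)

end StarAlgHom

/-- Let `F = FreeGroup S` be an uncountable free group, `CF = C*(F)` its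
full group C*-algebra, and `X ⊆ C*(F)` a separable subspace.  Then there is a
C*-subalgebra `C' ⊆ C*(F)`, unitally *-isomorphic to `𝒞 = C*(F_∞)` (the full group
C*-algebra of the free group on countably many generators), with `X ⊆ C'`, together
with a unital completely positive contractive projection `P : C*(F) → C'`. -/
theorem stmt_8 (S : Type) (hS : ¬ Countable S)
    (CF : Type) [CStarAlgebra CF] (uF : FreeGroup S →* unitary CF)
    (hCF : IsUniversalFreeGroupCStar S CF uF)
    (𝒞 : Type) [CStarAlgebra 𝒞] (u𝒞 : FreeGroup ℕ →* unitary 𝒞)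
    (h𝒞 : IsUniversalFreeGroupCStar ℕ 𝒞 u𝒞)
    (X : Submodule ℂ CF) (hX : TopologicalSpace.SeparableSpace X) :
    ∃ C' : StarSubalgebra ℂ CF,
      (X : Set CF) ⊆ (C' : Set CF) ∧
      Nonempty (C' ≃⋆ₐ[ℂ] 𝒞) ∧
      ∃ P : CF →ₗ[ℂ] CF,
        P 1 = 1 ∧ IsCPMap P ∧ (∀ y, ‖P y‖ ≤ ‖y‖) ∧
        (∀ y, P y ∈ C') ∧ (∀ y ∈ C', P y = y) := by
  obtain ⟨K, hKc, hXK⟩ :=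
    hCF.dense_span_range.exists_countable_subset_closure_span (IsSeparable.of_subtype (X : Set CF))
  obtain ⟨T, hTc, hKT⟩ := FreeGroup.exists_countable_subset_closure_image_of hKc
  have : Uncountable S := not_countable_iff.mp hS
  obtain ⟨f, hf, hTf⟩ := hTc.exists_injective_nat_subset_range
  obtain ⟨φ, ψ, hψφ, hφ⟩ :=
    hCF.exists_leftInverse_lift h𝒞 (FreeGroup.leftInverse_map_invFun_map hf)
  have hKφ : (fun g => (uF g : CF)) '' K ⊆ φ.range := by
    rintro _ ⟨g, hg, rfl⟩
    obtain ⟨w, rfl⟩ : g ∈ (FreeGroup.map f).range :=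
      FreeGroup.range_map ▸ Subgroup.closure_mono (image_mono hTf) (hKT hg)
    exact ⟨u𝒞 w, hφ w⟩
  have hXφ : (X : Set CF) ⊆ φ.range := hXK.trans <|
    closure_minimal (span_le (p := Subalgebra.toSubmodule φ.range.toSubalgebra).mpr hKφ)
      (StarAlgHom.isClosed_range_of_leftInverse hψφ)
  obtain ⟨P, hP⟩ := StarAlgHom.exists_ucp_projection_range hψφ
  exact ⟨φ.range, hXφ, ⟨(StarAlgEquiv.ofInjective φ hψφ.injective).symm⟩, P, hP⟩
end
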